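/- Let N be an integer and define the real polynomial P(α) = α⁴ − 2(N−4)α³ + (N²−10N+20)α² + 2(N−2)(N−4)α − 8(N−2)(N−4). If N ≥ 13, then P has four distinct real roots, of which exactly one lies in the open interval (0, (N−4)/2), exactly two are greater than (N−4)/2, and exactly one is negative. If 5 ≤ N ≤ 12, then P has exactly two real roots (the remaining two roots being a pair of complex conjugates). -/
import Mathlib
set_option maxHeartbeats 1000000


/-- The characteristic polynomial
`P(α) = α⁴ - 2(N-4)α³ + (N²-10N+20)α² + 2(N-2)(N-4)α - 8(N-2)(N-4)` (real version). -/
noncomputable def charPolyR (N : ℕ) (α : ℝ) : ℝ :=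
  α ^ 4 - 2 * ((N : ℝ) - 4) * α ^ 3 + ((N : ℝ) ^ 2 - 10 * (N : ℝ) + 20) * α ^ 2 +
    2 * ((N : ℝ) - 2) * ((N : ℝ) - 4) * α - 8 * ((N : ℝ) - 2) * ((N : ℝ) - 4)

/-- The characteristic polynomial (complex version). -/
noncomputable def charPolyC (N : ℕ) (z : ℂ) : ℂ :=
  z ^ 4 - 2 * ((N : ℂ) - 4) * z ^ 3 + ((N : ℂ) ^ 2 - 10 * (N : ℂ) + 20) * z ^ 2 +
    2 * ((N : ℂ) - 2) * ((N : ℂ) - 4) * z - 8 * ((N : ℂ) - 2) * ((N : ℂ) - 4)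

/-- Root structure of the characteristic polynomial: if `N ≥ 13` it has four distinct
real roots — exactly one negative, exactly one in `(0, (N-4)/2)` and exactly two greater
than `(N-4)/2` — while if `5 ≤ N ≤ 12` it has exactly two real roots, the remaining two
roots being a pair of complex conjugates. -/
theorem charPoly_roots (N : ℕ) :
    (13 ≤ N →
      ∃ r₁ r₂ r₃ r₄ : ℝ,
        r₁ ≠ r₂ ∧ r₁ ≠ r₃ ∧ r₁ ≠ r₄ ∧ r₂ ≠ r₃ ∧ r₂ ≠ r₄ ∧ r₃ ≠ r₄ ∧
        charPolyR N r₁ = 0 ∧ charPolyR N r₂ = 0 ∧ charPolyR N r₃ = 0 ∧ charPolyR N r₄ = 0 ∧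
        (∀ r : ℝ, charPolyR N r = 0 → r = r₁ ∨ r = r₂ ∨ r = r₃ ∨ r = r₄) ∧
        r₁ < 0 ∧
        0 < r₂ ∧ r₂ < ((N : ℝ) - 4) / 2 ∧
        ((N : ℝ) - 4) / 2 < r₃ ∧ ((N : ℝ) - 4) / 2 < r₄) ∧
    (5 ≤ N → N ≤ 12 →
      ∃ r₁ r₂ : ℝ, ∃ z : ℂ,
        r₁ ≠ r₂ ∧ charPolyR N r₁ = 0 ∧ charPolyR N r₂ = 0 ∧
        (∀ r : ℝ, charPolyR N r = 0 → r = r₁ ∨ r = r₂) ∧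
        z.im ≠ 0 ∧ charPolyC N z = 0 ∧ charPolyC N (starRingEnd ℂ z) = 0 ∧
        (∀ w : ℂ, charPolyC N w = 0 →
          w = (r₁ : ℂ) ∨ w = (r₂ : ℂ) ∨ w = z ∨ w = starRingEnd ℂ z)) := by
  constructor
  · intro h13

    have hn : (13:ℝ) ≤ (N:ℝ) := by exact_mod_cast h13
    have h1 : (0:ℝ) ≤ ((N:ℝ)-2)*(9*(N:ℝ)-34) := by nlinarith
    set d := Real.sqrt (((N:ℝ)-2)*(9*(N:ℝ)-34)) with hddef
    have hd0 : 0 ≤ d := Real.sqrt_nonneg _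
    have hd2 : d^2 = ((N:ℝ)-2)*(9*(N:ℝ)-34) := Real.sq_sqrt h1
    have hdgt : (N:ℝ)-2 < d := by nlinarith [hd2, hd0]
    have hQ : ((N:ℝ)^2-4*(N:ℝ)+8)^2 - 16*(((N:ℝ)-2)*(9*(N:ℝ)-34)) > 0 := by
      have hm : 0 ≤ (N:ℝ) - 13 := by linarith
      nlinarith [hm, mul_nonneg hm hm, mul_nonneg (mul_nonneg hm hm) hm,
        mul_nonneg (mul_nonneg (mul_nonneg hm hm) hm) hm]
    have hA : 4*d < (N:ℝ)^2-4*(N:ℝ)+8 := by nlinarith [hd2, hd0, hQ]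
    have harg1 : (0:ℝ) ≤ (N:ℝ)^2-4*(N:ℝ)+8+4*d := by nlinarith
    have harg2 : (0:ℝ) < (N:ℝ)^2-4*(N:ℝ)+8-4*d := by linarith
    set e1 := Real.sqrt ((N:ℝ)^2-4*(N:ℝ)+8+4*d) with he1def
    set e2 := Real.sqrt ((N:ℝ)^2-4*(N:ℝ)+8-4*d) with he2def
    have he1sq : e1^2 = (N:ℝ)^2-4*(N:ℝ)+8+4*d := Real.sq_sqrt harg1
    have he2sq : e2^2 = (N:ℝ)^2-4*(N:ℝ)+8-4*d := Real.sq_sqrt harg2.le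
    have he10 : 0 ≤ e1 := Real.sqrt_nonneg _
    have he2pos : 0 < e2 := Real.sqrt_pos.2 harg2
    have he1gt : (N:ℝ)-4 < e1 := by nlinarith [he1sq, he10, hd0, hn]
    have he2lt : e2 < (N:ℝ)-4 := by nlinarith [he2sq, he2pos, hdgt, hn]
    have he21 : e2 < e1 := by nlinarith [he1sq, he2sq, he10, he2pos, hdgt, hn]
    have hfac : ∀ α : ℝ, charPolyR N α =
        (α^2 - ((N:ℝ)-4)*α - (((N:ℝ)-2)+d)) * (α^2 - ((N:ℝ)-4)*α - (((N:ℝ)-2)-d)) := by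
      intro α; unfold charPolyR; linear_combination hd2
    have o1 : ((N:ℝ)-4-e1)/2 < ((N:ℝ)-4-e2)/2 := by linarith
    have o2 : ((N:ℝ)-4-e2)/2 < ((N:ℝ)-4+e2)/2 := by linarith
    have o3 : ((N:ℝ)-4+e2)/2 < ((N:ℝ)-4+e1)/2 := by linarith
    refine ⟨((N:ℝ)-4-e1)/2, ((N:ℝ)-4-e2)/2, ((N:ℝ)-4+e2)/2, ((N:ℝ)-4+e1)/2,
      ?_, ?_, ?_, ?_, ?_, ?_,
      ?_, ?_, ?_, ?_, ?_, ?_, ?_, ?_, ?_, ?_⟩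
    · exact ne_of_lt o1
    · exact ne_of_lt (o1.trans o2)
    · exact ne_of_lt ((o1.trans o2).trans o3)
    · exact ne_of_lt o2
    · exact ne_of_lt (o2.trans o3)
    · exact ne_of_lt o3
    · rw [hfac]; apply mul_eq_zero_of_left; linear_combination he1sq/4
    · rw [hfac]; apply mul_eq_zero_of_right; linear_combination he2sq/4
    · rw [hfac]; apply mul_eq_zero_of_right; linear_combination he2sq/4
    · rw [hfac]; apply mul_eq_zero_of_left; linear_combination he1sq/4
    · intro r hr
      rw [hfac] at hr
      rcases mul_eq_zero.1 hr with h | h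
      · have h2 : (r - ((N:ℝ)-4-e1)/2) * (r - ((N:ℝ)-4+e1)/2) = 0 := by
          linear_combination h - he1sq/4
        rcases mul_eq_zero.1 h2 with h3 | h3
        · exact Or.inl (by linarith [sub_eq_zero.1 h3])
        · exact Or.inr (Or.inr (Or.inr (by linarith [sub_eq_zero.1 h3])))
      · have h2 : (r - ((N:ℝ)-4-e2)/2) * (r - ((N:ℝ)-4+e2)/2) = 0 := by
          linear_combination h - he2sq/4
        rcases mul_eq_zero.1 h2 with h3 | h3
        · exact Or.inr (Or.inl (by linarith [sub_eq_zero.1 h3]))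
        · exact Or.inr (Or.inr (Or.inl (by linarith [sub_eq_zero.1 h3])))
    · linarith
    · linarith
    · linarith
    · linarith
    · linarith
  · intro h5 h12

    have hn : (5:ℝ) ≤ (N:ℝ) := by exact_mod_cast h5
    have hQ : ((N:ℝ)^2-4*(N:ℝ)+8)^2 < 16*(((N:ℝ)-2)*(9*(N:ℝ)-34)) := by
      interval_cases N <;> norm_num
    have h1 : (0:ℝ) ≤ ((N:ℝ)-2)*(9*(N:ℝ)-34) := by nlinarith
    set d := Real.sqrt (((N:ℝ)-2)*(9*(N:ℝ)-34)) with hddef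
    have hd0 : 0 ≤ d := Real.sqrt_nonneg _
    have hd2 : d^2 = ((N:ℝ)-2)*(9*(N:ℝ)-34) := Real.sq_sqrt h1
    have hA : (N:ℝ)^2-4*(N:ℝ)+8 < 4*d := by nlinarith [hd2, hd0, hQ]
    have hApos : (0:ℝ) < (N:ℝ)^2-4*(N:ℝ)+8 := by nlinarith
    have harg1 : (0:ℝ) ≤ (N:ℝ)^2-4*(N:ℝ)+8+4*d := by nlinarith
    set e1 := Real.sqrt ((N:ℝ)^2-4*(N:ℝ)+8+4*d) with he1def
    have he1sq : e1^2 = (N:ℝ)^2-4*(N:ℝ)+8+4*d := Real.sq_sqrt harg1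
    have he1pos : 0 < e1 := Real.sqrt_pos.2 (by nlinarith)
    set f := Real.sqrt (4*d - ((N:ℝ)^2-4*(N:ℝ)+8)) with hfdef
    have hfsq : f^2 = 4*d - ((N:ℝ)^2-4*(N:ℝ)+8) := Real.sq_sqrt (by linarith)
    have hfpos : 0 < f := Real.sqrt_pos.2 (by linarith)
    have hd2C : ((d:ℂ))^2 = ((N:ℂ)-2)*(9*(N:ℂ)-34) := by exact_mod_cast congrArg Complex.ofReal hd2
    have he1sqC : ((e1:ℂ))^2 = (N:ℂ)^2-4*(N:ℂ)+8+4*(d:ℂ) := by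
      exact_mod_cast congrArg Complex.ofReal he1sq
    have hfsqC : ((f:ℂ))^2 = 4*(d:ℂ) - ((N:ℂ)^2-4*(N:ℂ)+8) := by
      exact_mod_cast congrArg Complex.ofReal hfsq
    have hfacR : ∀ α : ℝ, charPolyR N α =
        (α^2 - ((N:ℝ)-4)*α - (((N:ℝ)-2)+d)) * (α^2 - ((N:ℝ)-4)*α - (((N:ℝ)-2)-d)) := by
      intro α; unfold charPolyR; linear_combination hd2
    have hfacC : ∀ w : ℂ, charPolyC N w =
        (w^2 - ((N:ℂ)-4)*w - (((N:ℂ)-2)+(d:ℂ))) * (w^2 - ((N:ℂ)-4)*w - (((N:ℂ)-2)-(d:ℂ))) := by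
      intro w; unfold charPolyC; linear_combination hd2C
    set z : ℂ := Complex.ofReal (((N:ℝ)-4)/2) + Complex.ofReal (f/2) * Complex.I with hzdef
    have hzim : z.im = f/2 := by simp [hzdef]
    have hconj : (starRingEnd ℂ) z = Complex.ofReal (((N:ℝ)-4)/2) - Complex.ofReal (f/2) * Complex.I := by
      simp only [hzdef, map_add, map_mul, Complex.conj_ofReal, Complex.conj_I]; ring
    have hz : z^2 - ((N:ℂ)-4)*z - (((N:ℂ)-2)-(d:ℂ)) = 0 := by
      rw [hzdef]; push_cast
      linear_combination ((f:ℂ)/2)^2 * Complex.I_sq - (1/4 : ℂ) * hfsqC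
    have hzbar : ((starRingEnd ℂ) z)^2 - ((N:ℂ)-4)*((starRingEnd ℂ) z) - (((N:ℂ)-2)-(d:ℂ)) = 0 := by
      rw [hconj]; push_cast
      linear_combination ((f:ℂ)/2)^2 * Complex.I_sq - (1/4 : ℂ) * hfsqC
    refine ⟨((N:ℝ)-4-e1)/2, ((N:ℝ)-4+e1)/2, z, ?_, ?_, ?_, ?_, ?_, ?_, ?_, ?_⟩
    · exact ne_of_lt (by linarith)
    · rw [hfacR]; apply mul_eq_zero_of_left; linear_combination he1sq/4
    · rw [hfacR]; apply mul_eq_zero_of_left; linear_combination he1sq/4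
    · intro r hr
      rw [hfacR] at hr
      rcases mul_eq_zero.1 hr with h | h
      · have h2 : (r - ((N:ℝ)-4-e1)/2) * (r - ((N:ℝ)-4+e1)/2) = 0 := by
          linear_combination h - he1sq/4
        rcases mul_eq_zero.1 h2 with h3 | h3
        · exact Or.inl (by linarith [sub_eq_zero.1 h3])
        · exact Or.inr (by linarith [sub_eq_zero.1 h3])
      · exfalso; nlinarith [h, hA, sq_nonneg (r - ((N:ℝ)-4)/2)]
    · rw [hzim]; positivity
    · rw [hfacC]; exact mul_eq_zero_of_right _ hz
    · rw [hfacC]; exact mul_eq_zero_of_right _ hzbar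
    · intro w hw
      rw [hfacC] at hw
      rcases mul_eq_zero.1 hw with h | h
      · have h2 : (w - (((((N:ℝ)-4-e1)/2 : ℝ)):ℂ)) * (w - (((((N:ℝ)-4+e1)/2 : ℝ)):ℂ)) = 0 := by
          push_cast
          linear_combination h - he1sqC/4
        rcases mul_eq_zero.1 h2 with h3 | h3
        · exact Or.inl (sub_eq_zero.1 h3)
        · exact Or.inr (Or.inl (sub_eq_zero.1 h3))
      · have h2 : (w - z) * (w - (starRingEnd ℂ) z) = 0 := by
          rw [hzdef, hconj]; push_cast
          linear_combination h + (1/4 : ℂ) * hfsqC - ((f:ℂ)/2)^2 * Complex.I_sq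
        rcases mul_eq_zero.1 h2 with h3 | h3
        · exact Or.inr (Or.inr (Or.inl (sub_eq_zero.1 h3)))
        · exact Or.inr (Or.inr (Or.inr (sub_eq_zero.1 h3)))
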